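/- (Lemma A.2, part 1.) Let n ≥ 2, let Q = diag(q_1,…,q_n) with q_i > 0, let L_c be the Laplacian of a connected undirected graph, and define Q̄ := Q^{-1}𝟙𝟙ᵀQ^{-1}/(𝟙ᵀQ^{-1}𝟙) − Q^{-1} and Φ := −L_cQ + (1/n)𝟙𝟙ᵀ. Then Φ is invertible. Moreover, if γ > 0, 0 < θ < 1, and γ‖Φ^{-1}Q̄‖ ≤ θ, then γQ̄ + Φ is invertible, ‖(I + γΦ^{-1}Q̄)^{-1}‖ ≤ 1/(1 − θ), and for every d̃ ∈ ℝ^n one has ‖γ(γQ̄ + Φ)^{-1} Q̄² Q d̃‖ ≤ (γ/(1 − θ)) ‖Φ^{-1} Q̄² Q d̃‖. -/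

import Mathlib

open Matrix Filter

/-- Euclidean norm on `Fin k → ℝ`. -/
noncomputable def euclNorm {k : ℕ} (v : Fin k → ℝ) : ℝ :=
  ‖(WithLp.equiv 2 (Fin k → ℝ)).symm v‖

/-- Operator norm on matrices induced by the Euclidean norms. -/
noncomputable def matOpNorm {k l : ℕ} (A : Matrix (Fin k) (Fin l) ℝ) : ℝ :=
  ‖LinearMap.toContinuousLinearMap (Matrix.toEuclideanLin A)‖

/-- The all-ones vector `𝟙`. -/
def onesVec (k : ℕ) : Fin k → ℝ := fun _ => 1

/-- The all-ones matrix `𝟙𝟙ᵀ`. -/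
def onesMat (k : ℕ) : Matrix (Fin k) (Fin k) ℝ := Matrix.of fun _ _ => 1

/-- Scalar saturation: `sat(y; l, u) = l` if `y ≤ l`, `u` if `u ≤ y`, and `y` otherwise. -/
noncomputable def sat1 (y l u : ℝ) : ℝ := if y ≤ l then l else if u ≤ y then u else y

/-- Componentwise (multidimensional) saturation function. -/
noncomputable def satv {k : ℕ} (x xm xp : Fin k → ℝ) : Fin k → ℝ :=
  fun i => sat1 (x i) (xm i) (xp i)

/-!
Suppose `Φ v = 0`. Since `𝟙ᵀ L_c = 0`, pairing with `𝟙` leaves only the averaging term, so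
`𝟙ᵀ v = 0`; then `L_c (Q v) = 0`, hence `Q v = c 𝟙`, i.e. `v = c Q⁻¹ 𝟙`, and `𝟙ᵀ v = 0` forces `c = 0`
because all `q_i > 0`. For the second part, `γ Q̄ + Φ = Φ (I + B)` with `B = γ Φ⁻¹ Q̄` and
`‖B‖ ≤ θ < 1`, so the Neumann series gives `‖(I + B)⁻¹‖ ≤ 1 / (1 - θ)` and
`γ (γ Q̄ + Φ)⁻¹ Q̄² Q d̃ = γ (I + B)⁻¹ Φ⁻¹ Q̄² Q d̃`.
-/

open scoped Matrix.Norms.L2Operator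

theorem norm_ringInverse_one_add_le {R : Type*} [NormedRing R] [NormOneClass R]
    [HasSummableGeomSeries R] {b : R} (hb : ‖b‖ < 1) :
    ‖Ring.inverse (1 + b)‖ ≤ (1 - ‖b‖)⁻¹ := by
  have hb' : ‖-b‖ < 1 := by rwa [norm_neg]
  have h := tsum_geometric_le_of_norm_lt_one (-b) hb'
  rwa [geom_series_eq_inverse _ hb', sub_neg_eq_add, norm_neg, norm_one, sub_self,
    zero_add] at h

theorem isUnit_one_add_of_norm_lt_one {R : Type*} [NormedRing R] [HasSummableGeomSeries R]
    {b : R} (hb : ‖b‖ < 1) : IsUnit (1 + b) := by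
  simpa only [sub_neg_eq_add] using isUnit_one_sub_of_norm_lt_one (x := -b) (by rwa [norm_neg])

theorem Matrix.smul_add_eq_mul_one_add {ι R : Type*} [Fintype ι] [DecidableEq ι] [CommRing R]
    {Φ : Matrix ι ι R} (hΦ : IsUnit Φ.det) (γ : R) (M : Matrix ι ι R) :
    γ • M + Φ = Φ * (1 + γ • (Φ⁻¹ * M)) := by
  rw [mul_add, mul_one, mul_smul_comm, ← Matrix.mul_assoc, mul_nonsing_inv Φ hΦ, Matrix.one_mul,
    add_comm]

section Laplacian

variable {n : ℕ}

theorem onesMat_mulVec (v : Fin n → ℝ) : onesMat n *ᵥ v = (∑ i, v i) • onesVec n := by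
  ext i
  simp [onesMat, onesVec, mulVec, dotProduct]

theorem onesVec_dotProduct (v : Fin n → ℝ) : onesVec n ⬝ᵥ v = ∑ i, v i := by
  simp [onesVec, dotProduct]

theorem Matrix.IsSymm.onesVec_vecMul {L : Matrix (Fin n) (Fin n) ℝ} (hL : L.IsSymm)
    (hL1 : L *ᵥ onesVec n = 0) : onesVec n ᵥ* L = 0 := by
  rw [← hL.eq, vecMul_transpose, hL1]

theorem eq_zero_of_diagonal_mulVec_mem_span_onesVec {q : Fin n → ℝ} (hq : ∀ i, 0 < q i)
    {v : Fin n → ℝ} (hv : diagonal q *ᵥ v ∈ Submodule.span ℝ {onesVec n})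
    (hsum : ∑ i, v i = 0) : v = 0 := by
  obtain ⟨c, hc⟩ := Submodule.mem_span_singleton.1 hv
  have hv_eq : ∀ i, v i = c * (q i)⁻¹ := fun i => by
    have := congrFun hc i
    simp only [Pi.smul_apply, onesVec, smul_eq_mul, mul_one, mulVec_diagonal] at this
    rw [this, mul_comm (q i), mul_inv_cancel_right₀ (hq i).ne']
  ext i
  have hsum_inv_pos : 0 < ∑ j, (q j)⁻¹ :=
    Finset.sum_pos (fun j _ => inv_pos.2 (hq j)) ⟨i, Finset.mem_univ i⟩
  have hc0 : c = 0 := by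
    simp only [hv_eq, ← Finset.mul_sum] at hsum
    exact (mul_eq_zero.1 hsum).resolve_right hsum_inv_pos.ne'
  simp [hv_eq, hc0]

theorem isUnit_det_neg_mul_diagonal_add_smul_onesMat (hn : n ≠ 0) {L : Matrix (Fin n) (Fin n) ℝ}
    (hL1 : onesVec n ᵥ* L = 0)
    (hker : LinearMap.ker L.mulVecLin = Submodule.span ℝ {onesVec n})
    {q : Fin n → ℝ} (hq : ∀ i, 0 < q i) {c : ℝ} (hc : c ≠ 0) :
    IsUnit (-(L * diagonal q) + c • onesMat n).det := by
  rw [isUnit_iff_ne_zero, Ne, ← exists_mulVec_eq_zero_iff]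
  rintro ⟨v, hv0, hv⟩
  rw [add_mulVec, neg_mulVec, ← mulVec_mulVec, smul_mulVec, onesMat_mulVec] at hv
  have hsum : ∑ i, v i = 0 := by
    have h := congrArg (onesVec n ⬝ᵥ ·) hv
    simp only [dotProduct_add, dotProduct_neg, dotProduct_mulVec, hL1,
      dotProduct_smul, onesVec_dotProduct, onesVec, Finset.sum_const, Finset.card_univ,
      Fintype.card_fin, dotProduct_zero, smul_eq_mul] at h
    simpa [hc, hn] using h
  rw [hsum, zero_smul, smul_zero, add_zero, neg_eq_zero] at hv
  exact hv0 (eq_zero_of_diagonal_mulVec_mem_span_onesVec hq (hker ▸ hv) hsum)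

end Laplacian

theorem matOpNorm_eq_norm {m n : ℕ} (A : Matrix (Fin m) (Fin n) ℝ) : matOpNorm A = ‖A‖ := rfl

theorem euclNorm_mulVec_le {m n : ℕ} (A : Matrix (Fin m) (Fin n) ℝ) (v : Fin n → ℝ) :
    euclNorm (A *ᵥ v) ≤ ‖A‖ * euclNorm v :=
  A.l2_opNorm_mulVec (WithLp.toLp 2 v)

theorem euclNorm_smul {n : ℕ} (c : ℝ) (v : Fin n → ℝ) : euclNorm (c • v) = |c| * euclNorm v := by
  simp [euclNorm, WithLp.toLp_smul, norm_smul]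

theorem lemmaA2_part1_general {n : ℕ} (hn : 2 ≤ n)
    (q : Fin n → ℝ) (hq : ∀ i, 0 < q i)
    (Lc : Matrix (Fin n) (Fin n) ℝ) (hsymm : Lc.IsSymm)
    (hLc1 : Lc *ᵥ onesVec n = 0)
    (hker : LinearMap.ker Lc.mulVecLin = Submodule.span ℝ {onesVec n})
    (Q Qbar Φ : Matrix (Fin n) (Fin n) ℝ)
    (hQ : Q = Matrix.diagonal q)
    (hΦ : Φ = -(Lc * Q) + (n : ℝ)⁻¹ • onesMat n) :
    IsUnit Φ.det ∧
    ∀ γ θ : ℝ, 0 < γ → 0 < θ → θ < 1 → γ * matOpNorm (Φ⁻¹ * Qbar) ≤ θ →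
      IsUnit (γ • Qbar + Φ).det ∧
      matOpNorm (1 + γ • (Φ⁻¹ * Qbar))⁻¹ ≤ 1 / (1 - θ) ∧
      ∀ dtil : Fin n → ℝ,
        euclNorm (γ • (((γ • Qbar + Φ)⁻¹ * (Qbar * Qbar * Q)) *ᵥ dtil)) ≤
          γ / (1 - θ) * euclNorm ((Φ⁻¹ * (Qbar * Qbar * Q)) *ᵥ dtil) := by
  have : Nontrivial (Fin n) := Fin.nontrivial_iff_two_le.2 hn
  have hΦ_det : IsUnit Φ.det := hΦ ▸ hQ ▸ isUnit_det_neg_mul_diagonal_add_smul_onesMat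
    (by omega) (hsymm.onesVec_vecMul hLc1) hker hq (by positivity)
  refine ⟨hΦ_det, fun γ θ hγ _ hθ1 hγθ => ?_⟩
  set B := γ • (Φ⁻¹ * Qbar)
  have hB : ‖B‖ ≤ θ := by rwa [norm_smul, Real.norm_of_nonneg hγ.le, ← matOpNorm_eq_norm]
  have hB_unit : IsUnit (1 + B) := isUnit_one_add_of_norm_lt_one (hB.trans_lt hθ1)
  have hinv_norm : ‖(1 + B)⁻¹‖ ≤ 1 / (1 - θ) := by
    rw [nonsing_inv_eq_ringInverse, one_div]
    exact (norm_ringInverse_one_add_le (hB.trans_lt hθ1)).trans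
      (inv_anti₀ (by linarith) (by linarith))
  have hfac := smul_add_eq_mul_one_add hΦ_det γ Qbar
  refine ⟨hfac ▸ (isUnit_iff_isUnit_det _).1 (((isUnit_iff_isUnit_det Φ).2 hΦ_det).mul hB_unit),
    hinv_norm, fun dtil => ?_⟩
  set x := (Φ⁻¹ * (Qbar * Qbar * Q)) *ᵥ dtil
  have hx : ((γ • Qbar + Φ)⁻¹ * (Qbar * Qbar * Q)) *ᵥ dtil = (1 + B)⁻¹ *ᵥ x := by
    rw [hfac, Matrix.mul_inv_rev, mulVec_mulVec, Matrix.mul_assoc]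
  rw [hx]
  calc euclNorm (γ • ((1 + B)⁻¹ *ᵥ x)) ≤ γ * (‖(1 + B)⁻¹‖ * euclNorm x) := by
        rw [euclNorm_smul, abs_of_pos hγ]
        exact mul_le_mul_of_nonneg_left (euclNorm_mulVec_le _ x) hγ.le
    _ ≤ γ * (1 / (1 - θ) * euclNorm x) := by gcongr; exact norm_nonneg _
    _ = γ / (1 - θ) * euclNorm x := by ring

/-- Lemma A.2, part 1: `Φ` is invertible; and if `γ‖Φ⁻¹Q̄‖ ≤ θ < 1`
then `γQ̄ + Φ` is invertible, `‖(I + γΦ⁻¹Q̄)⁻¹‖ ≤ 1/(1−θ)`, and the Neumann-series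
bound on `γ(γQ̄ + Φ)⁻¹Q̄²Qd̃` holds. -/
theorem lemmaA2_part1 {n : ℕ} (hn : 2 ≤ n)
    (q : Fin n → ℝ) (hq : ∀ i, 0 < q i)
    (Lc : Matrix (Fin n) (Fin n) ℝ) (hsymm : Lc.IsSymm)
    (hoff : ∀ i j, i ≠ j → Lc i j ≤ 0)
    (hLc1 : Lc *ᵥ onesVec n = 0)
    (hker : LinearMap.ker Lc.mulVecLin = Submodule.span ℝ {onesVec n})
    (Q Qinv Qbar Φ : Matrix (Fin n) (Fin n) ℝ)
    (hQ : Q = Matrix.diagonal q)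
    (hQinv : Qinv = Matrix.diagonal fun i => (q i)⁻¹)
    (hQbar : Qbar =
      (onesVec n ⬝ᵥ (Qinv *ᵥ onesVec n))⁻¹ • (Qinv * onesMat n * Qinv) - Qinv)
    (hΦ : Φ = -(Lc * Q) + (n : ℝ)⁻¹ • onesMat n) :
    IsUnit Φ.det ∧
    ∀ γ θ : ℝ, 0 < γ → 0 < θ → θ < 1 → γ * matOpNorm (Φ⁻¹ * Qbar) ≤ θ →
      IsUnit (γ • Qbar + Φ).det ∧
      matOpNorm (1 + γ • (Φ⁻¹ * Qbar))⁻¹ ≤ 1 / (1 - θ) ∧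
      ∀ dtil : Fin n → ℝ,
        euclNorm (γ • (((γ • Qbar + Φ)⁻¹ * (Qbar * Qbar * Q)) *ᵥ dtil)) ≤
          γ / (1 - θ) * euclNorm ((Φ⁻¹ * (Qbar * Qbar * Q)) *ᵥ dtil) :=
  lemmaA2_part1_general hn q hq Lc hsymm hLc1 hker Q Qbar Φ hQ hΦ
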